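/- In the Leibniz algebra 𝔏₁^{1/4} (products e₂e₂ = (1/4)e₁, e₃e₂ = e₁, e₃e₃ = e₁), for t ≠ 0 the vectors E₁ᵗ = t³e₁, E₂ᵗ = -2t·e₂ + t·e₃, E₃ᵗ = 2t²e₂ form a basis in which the structure constants are polynomials in t specializing at t = 0 to those of the Heisenberg algebra 𝔤₁ (whose sole nonzero products are e₂e₃ = e₁, e₃e₂ = -e₁). -/
import Mathlib


/-- Multiplication of `𝔏₁^{1/4}` on ℂ³ (basis `e₁,e₂,e₃` = indices `0,1,2`):
`e₂e₂ = (1/4)e₁`, `e₃e₂ = e₁`, `e₃e₃ = e₁`, other basis products zero. -/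
noncomputable def mulL1q (x y : Fin 3 → ℂ) : Fin 3 → ℂ :=
  ![(1 / 4) * x 1 * y 1 + x 2 * y 1 + x 2 * y 2, 0, 0]

/-- Multiplication of the Heisenberg algebra `𝔤₁` on ℂ³: `e₂e₃ = e₁`,
`e₃e₂ = -e₁`, other basis products zero. -/
def mulG1 (x y : Fin 3 → ℂ) : Fin 3 → ℂ := ![x 1 * y 2 - x 2 * y 1, 0, 0]

/-- The parametrized basis `E₁ᵗ = t³e₁`, `E₂ᵗ = -2t·e₂ + t·e₃`, `E₃ᵗ = 2t²e₂`. -/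
def E9 (t : ℂ) : Fin 3 → Fin 3 → ℂ :=
  ![![t ^ 3, 0, 0], ![0, -2 * t, t], ![0, 2 * t ^ 2, 0]]

noncomputable def c9 : Fin 3 → Fin 3 → Fin 3 → Polynomial ℂ := fun i j k =>
  if k = 0 then
    (if i = 1 ∧ j = 2 then 1 else if i = 2 ∧ j = 1 then -1 else
      if i = 2 ∧ j = 2 then Polynomial.X else 0)
  else 0

/-- `𝔏₁^{1/4}` degenerates to `𝔤₁`: for `t ≠ 0` the `Eᵢᵗ` form a basis in which the
structure constants of `𝔏₁^{1/4}` are polynomials in `t` specializing at `t = 0` to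
those of `𝔤₁`. -/
theorem stmt_9 : ∃ c : Fin 3 → Fin 3 → Fin 3 → Polynomial ℂ,
    (∀ t : ℂ, t ≠ 0 → LinearIndependent ℂ (E9 t) ∧
      ∀ i j, mulL1q (E9 t i) (E9 t j) = ∑ k, (c i j k).eval t • E9 t k) ∧
    (∀ i j, mulG1 (Pi.single i 1) (Pi.single j 1)
      = ∑ k, (c i j k).eval 0 • (Pi.single k 1 : Fin 3 → ℂ)) := by
  refine ⟨c9, fun t ht => ⟨?_, ?_⟩, ?_⟩
  · have : IsUnit (Matrix.of (E9 t)) := by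
      rw [Matrix.isUnit_iff_isUnit_det, isUnit_iff_ne_zero]
      have : (Matrix.of (E9 t)).det = -2 * t ^ 6 := by
        simp [Matrix.det_fin_three, E9]; ring
      rw [this]
      simp [ht]
    exact Matrix.linearIndependent_rows_iff_isUnit.mpr this
  · intro i j
    fin_cases i <;> fin_cases j <;>
      · funext k
        fin_cases k <;>
          simp [mulL1q, E9, c9, Fin.sum_univ_three] <;> ring
  · intro i j
    fin_cases i <;> fin_cases j <;>
      · funext k
        fin_cases k <;>
          simp [mulG1, c9, Fin.sum_univ_three, Pi.single_apply]
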